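/- Let ~ be the equivalence relation on 𝓒(X) generated by connectedness. The assignment sending M ∈ 𝓒(X) to the dihomotopy class in X of any total directed path of X_M is well defined and induces a bijection between the set of equivalence classes of 𝓒(X) under ~ (the connected components of the index poset) and the set of dihomotopy classes of total directed paths in X (the schedulings of X). -/

import Mathlib

open Set

/-- A directed path in `Y ⊆ ℝⁿ`: a continuous map from the unit interval, all of whose
coordinate functions are monotone nondecreasing, with values in `Y`. -/
def IsDiPath (n : ℕ) (Y : Set (Fin n → ℝ)) (p : unitInterval → Fin n → ℝ) : Prop :=
  Continuous p ∧ (∀ t, p t ∈ Y) ∧ ∀ j : Fin n, Monotone fun t => p t j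

/-- A total directed path goes from `(0,…,0)` to `(1,…,1)`. -/
def IsTotalDiPath (n : ℕ) (Y : Set (Fin n → ℝ)) (p : unitInterval → Fin n → ℝ) : Prop :=
  IsDiPath n Y p ∧ p 0 = (fun _ => (0:ℝ)) ∧ p 1 = (fun _ => (1:ℝ))

/-- The unit cube `[0,1]^n`. -/
def cube (n : ℕ) : Set (Fin n → ℝ) := {z | ∀ j, z j ∈ Icc (0:ℝ) 1}

/-- `M` has no zero row. -/
def NoZeroRow {l n : ℕ} (M : Fin l → Fin n → Bool) : Prop := ∀ i, ∃ j, M i j = true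

/-- Every column of `M` contains exactly one `1`. -/
def ColUnit {l n : ℕ} (M : Fin l → Fin n → Bool) : Prop := ∀ j, ∃! i, M i j = true

/-- Entrywise order on boolean matrices. -/
def matLE {l n : ℕ} (M N : Fin l → Fin n → Bool) : Prop := ∀ i j, M i j = true → N i j = true

/-- The extended hole `R̃^i_j = ∏_{j'<j} [0,y^i_{j'}) × (x^i_j, y^i_j) × ∏_{j'>j} [0,y^i_{j'})`. -/
def extHole {l n : ℕ} (x y : Fin l → Fin n → ℝ) (i : Fin l) (j : Fin n) : Set (Fin n → ℝ) :=
  {z | z j ∈ Ioo (x i j) (y i j) ∧ ∀ j', j' ≠ j → z j' ∈ Ico (0:ℝ) (y i j')}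

/-- `X_M = [0,1]^n \ ⋃_{(i,j) : M(i,j)=1} R̃^i_j`. -/
def XM {l n : ℕ} (x y : Fin l → Fin n → ℝ) (M : Fin l → Fin n → Bool) : Set (Fin n → ℝ) :=
  cube n \ ⋃ (i : Fin l) (j : Fin n) (_ : M i j = true), extHole x y i j

/-- `M` is dead if `X_M` contains no total directed path. -/
def Dead {l n : ℕ} (x y : Fin l → Fin n → ℝ) (M : Fin l → Fin n → Bool) : Prop :=
  ¬ ∃ p, IsTotalDiPath n (XM x y M) p

/-- `X = [0,1]^n \ ⋃_i R^i` where `R^i = ∏_j (x^i_j, y^i_j)`. -/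
def Xfull {l n : ℕ} (x y : Fin l → Fin n → ℝ) : Set (Fin n → ℝ) :=
  cube n \ ⋃ i : Fin l, {z | ∀ j, z j ∈ Ioo (x i j) (y i j)}

/-- Elementary dihomotopy of directed paths with fixed common endpoints in `Y`. -/
def ElemDihomotopic (n : ℕ) (Y : Set (Fin n → ℝ)) (p q : unitInterval → Fin n → ℝ) : Prop :=
  IsDiPath n Y p ∧ IsDiPath n Y q ∧ p 0 = q 0 ∧ p 1 = q 1 ∧
  ∃ H : unitInterval → unitInterval → Fin n → ℝ,
    Continuous (fun tu : unitInterval × unitInterval => H tu.1 tu.2) ∧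
    H 0 = p ∧ H 1 = q ∧ (∀ t, IsDiPath n Y (H t)) ∧
    ∀ (u : unitInterval) (j : Fin n), Monotone fun t => H t u j

/-- Dihomotopy: equivalence relation generated by elementary dihomotopy. -/
def Dihomotopic (n : ℕ) (Y : Set (Fin n → ℝ)) :
    (unitInterval → Fin n → ℝ) → (unitInterval → Fin n → ℝ) → Prop :=
  Relation.EqvGen (ElemDihomotopic n Y)

/-- Two matrices are connected when their entrywise minimum has no zero row. -/
def MatConnected {l n : ℕ} (M N : Fin l → Fin n → Bool) : Prop :=
  ∀ i, ∃ j, M i j = true ∧ N i j = true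

/-!
Coordinatewise maxima of points of `X_M` stay in `X_M`, so two total directed paths `p, q` of
`X_M` are joined by the elementary dihomotopies `(t, u) ↦ p u ⊔ q (t u)` from `p` and from `q` to
`p ⊔ q`. As `X_M ∪ X_N ⊆ X_{M ∧ N} ⊆ X`, connected matrices give dihomotopic paths in `X`.

Conversely, by connectedness of `[0,1]`, a total directed path `p` of `X` has for every hole `R^i`
a time at which some coordinate `j` is still `≤ x^i_j` while another one `k` is already `≥ y^i_k`;
then `p` avoids `R̃^i_j`. So the matrix of the extended holes avoided by `p` is alive. Along an
elementary dihomotopy `H` the times `t` at which `H t` passes below hole `i` in coordinate `j` form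
closed sets, which makes the component of that matrix locally constant in `t`: this is the
inverse map.
-/

open unitInterval Topology

instance Pi.continuousSup {ι : Type*} {π : ι → Type*} [∀ i, TopologicalSpace (π i)]
    [∀ i, Max (π i)] [∀ i, ContinuousSup (π i)] : ContinuousSup (∀ i, π i) :=
  ⟨continuous_pi fun i =>
    ((continuous_apply i).comp continuous_fst).sup ((continuous_apply i).comp continuous_snd)⟩

theorem eventually_mem_imp_mem_of_isClosed {X ι : Type*} [TopologicalSpace X] [Finite ι]
    {C : ι → Set X} (hC : ∀ i, IsClosed (C i)) (x₀ : X) :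
    ∀ᶠ x in 𝓝 x₀, ∀ i, x ∈ C i → x₀ ∈ C i := by
  refine Filter.eventually_all.2 fun i => ?_
  by_cases h : x₀ ∈ C i
  · exact Filter.Eventually.of_forall fun _ _ => h
  · filter_upwards [(hC i).isOpen_compl.mem_nhds h] with x hx hxC using absurd hxC hx

section DirectedPaths

variable {n : ℕ} {Y Z : Set (Fin n → ℝ)} {p q : I → Fin n → ℝ}

theorem IsDiPath.mono (h : IsDiPath n Y p) (hYZ : Y ⊆ Z) : IsDiPath n Z p :=
  ⟨h.1, fun t => hYZ (h.2.1 t), h.2.2⟩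

theorem IsTotalDiPath.mono (h : IsTotalDiPath n Y p) (hYZ : Y ⊆ Z) : IsTotalDiPath n Z p :=
  ⟨h.1.mono hYZ, h.2⟩

theorem ElemDihomotopic.mono (h : ElemDihomotopic n Y p q) (hYZ : Y ⊆ Z) :
    ElemDihomotopic n Z p q := by
  obtain ⟨hp, hq, h0, h1, H, hHc, hH0, hH1, hH, hHm⟩ := h
  exact ⟨hp.mono hYZ, hq.mono hYZ, h0, h1, H, hHc, hH0, hH1, fun t => (hH t).mono hYZ, hHm⟩

theorem Dihomotopic.mono (h : Dihomotopic n Y p q) (hYZ : Y ⊆ Z) : Dihomotopic n Z p q :=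
  Relation.EqvGen.mono (fun _ _ h => ElemDihomotopic.mono h hYZ) _ _ h

theorem ElemDihomotopic.isTotalDiPath_iff (h : ElemDihomotopic n Y p q) :
    IsTotalDiPath n Y p ↔ IsTotalDiPath n Y q := by
  obtain ⟨hp, hq, h0, h1, -⟩ := h
  simp only [IsTotalDiPath, hp, hq, h0, h1, true_and]

theorem Dihomotopic.isTotalDiPath_iff (h : Dihomotopic n Y p q) :
    IsTotalDiPath n Y p ↔ IsTotalDiPath n Y q := by
  induction h with
  | rel _ _ h => exact h.isTotalDiPath_iff
  | refl => rfl
  | symm _ _ _ ih => exact ih.symm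
  | trans _ _ _ _ _ ih₁ ih₂ => exact ih₁.trans ih₂

theorem elemDihomotopic_sup (hsup : ∀ z ∈ Y, ∀ w ∈ Y, z ⊔ w ∈ Y) (hnonneg : ∀ z ∈ Y, 0 ≤ z)
    (hp : IsTotalDiPath n Y p) (hq : IsTotalDiPath n Y q) :
    ElemDihomotopic n Y p fun u => p u ⊔ q u := by
  obtain ⟨⟨hpc, hpY, hpm⟩, hp0, hp1⟩ := hp
  obtain ⟨⟨hqc, hqY, hqm⟩, hq0, hq1⟩ := hq
  have hH : ∀ t, IsDiPath n Y fun u => p u ⊔ q (t * u) := fun t =>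
    ⟨by fun_prop, fun u => hsup _ (hpY u) _ (hqY _),
      fun j => (hpm j).sup ((hqm j).comp fun _ _ h => mul_le_mul_right h t)⟩
  refine ⟨⟨hpc, hpY, hpm⟩, by simpa only [one_mul] using hH 1, ?_, ?_,
    fun t u => p u ⊔ q (t * u), by fun_prop, ?_, by simp only [one_mul], hH, fun u j => ?_⟩
  · simp [hp0, hq0]
  · simp [hp1, hq1]
  · funext u
    change p u ⊔ q (0 * u) = p u
    rw [zero_mul, hq0]
    exact sup_eq_left.2 (hnonneg _ (hpY u))
  · exact monotone_const.sup ((hqm j).comp fun _ _ h => mul_le_mul_left h u)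

theorem dihomotopic_of_sup_closed (hsup : ∀ z ∈ Y, ∀ w ∈ Y, z ⊔ w ∈ Y)
    (hnonneg : ∀ z ∈ Y, 0 ≤ z) (hp : IsTotalDiPath n Y p) (hq : IsTotalDiPath n Y q) :
    Dihomotopic n Y p q := by
  have hpq := elemDihomotopic_sup hsup hnonneg hp hq
  have hqp := elemDihomotopic_sup hsup hnonneg hq hp
  simp only [sup_comm (q _)] at hqp
  exact .trans _ _ _ (.rel _ _ hpq) (.symm _ _ (.rel _ _ hqp))

end DirectedPaths

section HoleComplements

variable {l n : ℕ} {x y : Fin l → Fin n → ℝ} {M N : Fin l → Fin n → Bool} {z w : Fin n → ℝ}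

theorem mem_XM_iff : z ∈ XM x y M ↔ z ∈ cube n ∧ ∀ i j, M i j = true → z ∉ extHole x y i j := by
  simp only [XM, mem_sdiff, mem_iUnion, not_exists]

theorem XM_antitone : Antitone (XM x y) := fun _ _ hMN _ hz =>
  mem_XM_iff.2 ⟨(mem_XM_iff.1 hz).1, fun i j hij => (mem_XM_iff.1 hz).2 i j (hMN i j hij)⟩

theorem XM_subset_Xfull (hM : NoZeroRow M) : XM x y M ⊆ Xfull x y := by
  intro z hz
  obtain ⟨hcube, havoid⟩ := mem_XM_iff.1 hz
  refine ⟨hcube, fun hR => ?_⟩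
  obtain ⟨i, hi⟩ := mem_iUnion.1 hR
  obtain ⟨j, hj⟩ := hM i
  exact havoid i j hj ⟨hi j, fun k _ => ⟨(hcube k).1, (hi k).2⟩⟩

theorem nonneg_of_mem_XM (hz : z ∈ XM x y M) : 0 ≤ z := fun j => ((mem_XM_iff.1 hz).1 j).1

theorem mem_extHole_of_le {i : Fin l} {j : Fin n} (hz : 0 ≤ z) (hzw : z ≤ w) (hj : z j = w j)
    (hw : w ∈ extHole x y i j) : z ∈ extHole x y i j :=
  ⟨hj ▸ hw.1, fun k hk => ⟨hz k, (hzw k).trans_lt (hw.2 k hk).2⟩⟩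

theorem sup_mem_XM (hz : z ∈ XM x y M) (hw : w ∈ XM x y M) : z ⊔ w ∈ XM x y M := by
  have hz0 := nonneg_of_mem_XM hz
  have hw0 := nonneg_of_mem_XM hw
  rw [mem_XM_iff] at hz hw ⊢
  refine ⟨fun j => ⟨le_sup_of_le_left (hz.1 j).1, sup_le (hz.1 j).2 (hw.1 j).2⟩, ?_⟩
  intro i j hij hzw
  rcases le_total (w j) (z j) with h | h
  · exact hz.2 i j hij (mem_extHole_of_le hz0 le_sup_left (sup_eq_left.2 h).symm hzw)
  · exact hw.2 i j hij (mem_extHole_of_le hw0 le_sup_right (sup_eq_right.2 h).symm hzw)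

theorem dihomotopic_of_isTotalDiPath_XM {p q : I → Fin n → ℝ} (hp : IsTotalDiPath n (XM x y M) p)
    (hq : IsTotalDiPath n (XM x y M) q) : Dihomotopic n (XM x y M) p q :=
  dihomotopic_of_sup_closed (fun _ hz _ hw => sup_mem_XM hz hw) (fun _ => nonneg_of_mem_XM) hp hq

theorem dihomotopic_Xfull_of_matConnected {p q : I → Fin n → ℝ} (hMN : MatConnected M N)
    (hp : IsTotalDiPath n (XM x y M) p) (hq : IsTotalDiPath n (XM x y N) q) :
    Dihomotopic n (Xfull x y) p q := by
  have hMN' : NoZeroRow (M ⊓ N) := fun i => by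
    obtain ⟨j, hM, hN⟩ := hMN i
    exact ⟨j, by simp [hM, hN]⟩
  exact (dihomotopic_of_isTotalDiPath_XM (hp.mono (XM_antitone inf_le_left))
    (hq.mono (XM_antitone inf_le_right))).mono (XM_subset_Xfull hMN')

end HoleComplements

section AvoidedHoles

variable {l n : ℕ} {x y : Fin l → Fin n → ℝ} {M : Fin l → Fin n → Bool} {p : I → Fin n → ℝ}

def PassesBelow (x y : Fin l → Fin n → ℝ) (i : Fin l) (j : Fin n) (p : I → Fin n → ℝ) : Prop :=
  ∃ u k, k ≠ j ∧ p u j ≤ x i j ∧ y i k ≤ p u k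

theorem exists_passesBelow (hx : ∀ i j, 0 < x i j) (hxy : ∀ i j, x i j < y i j)
    (hy1 : ∀ i j, y i j < 1) (hp : IsTotalDiPath n (Xfull x y) p) (i : Fin l) :
    ∃ j, PassesBelow x y i j p := by
  obtain ⟨⟨hpc, hpX, -⟩, hp0, hp1⟩ := hp
  have hcover : ∀ u, (∃ k, y i k ≤ p u k) ∨ ∃ j, p u j ≤ x i j := by
    intro u
    by_contra! h
    exact (hpX u).2 (mem_iUnion.2 ⟨i, fun j => ⟨h.2 j, h.1 j⟩⟩)
  have h0 : ∃ j, p 0 j ≤ x i j := by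
    refine (hcover 0).resolve_left ?_
    rintro ⟨k, hk⟩
    rw [hp0] at hk
    linarith [hx i k, hxy i k]
  have h1 : ∃ k, y i k ≤ p 1 k := by
    refine (hcover 1).resolve_right ?_
    rintro ⟨j, hj⟩
    rw [hp1] at hj
    linarith [hxy i j, hy1 i j]
  obtain ⟨u, -, hk, hj⟩ := isPreconnected_closed_iff.1 isPreconnected_univ
    (⋃ k, {u | y i k ≤ p u k}) (⋃ j, {u | p u j ≤ x i j})
    (isClosed_iUnion_of_finite fun k =>
      isClosed_le continuous_const ((continuous_apply k).comp hpc))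
    (isClosed_iUnion_of_finite fun j =>
      isClosed_le ((continuous_apply j).comp hpc) continuous_const)
    (fun u _ => (hcover u).imp mem_iUnion.2 mem_iUnion.2)
    ⟨1, mem_univ _, mem_iUnion.2 h1⟩ ⟨0, mem_univ _, mem_iUnion.2 h0⟩
  obtain ⟨k, hk⟩ := mem_iUnion.1 hk
  obtain ⟨j, hj⟩ := mem_iUnion.1 hj
  refine ⟨j, u, k, ?_, hj, hk⟩
  rintro rfl
  linarith [hxy i k, show y i k ≤ x i k from hk.trans hj]

theorem PassesBelow.notMem_extHole {i : Fin l} {j : Fin n}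
    (hmono : ∀ j, Monotone fun t => p t j) (h : PassesBelow x y i j p) (v : I) :
    p v ∉ extHole x y i j := by
  obtain ⟨u, k, hkj, hj, hk⟩ := h
  intro hv
  rcases le_total v u with hvu | huv
  · exact (hv.1.1.trans_le ((hmono j hvu).trans hj)).false
  · exact ((hv.2 k hkj).2.trans_le (hk.trans (hmono k huv))).false

theorem isClosed_setOf_passesBelow {H : I → I → Fin n → ℝ}
    (hH : Continuous fun tu : I × I => H tu.1 tu.2) (i : Fin l) (j : Fin n) :
    IsClosed {t | PassesBelow x y i j (H t)} := by
  have himage : {t | PassesBelow x y i j (H t)} = Prod.fst ''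
      ⋃ k ∈ {k | k ≠ j}, {tu : I × I | H tu.1 tu.2 j ≤ x i j ∧ y i k ≤ H tu.1 tu.2 k} := by
    ext t
    constructor
    · rintro ⟨u, k, hkj, hj, hk⟩
      exact ⟨(t, u), mem_iUnion₂.2 ⟨k, hkj, hj, hk⟩, rfl⟩
    · rintro ⟨⟨t, u⟩, htu, rfl⟩
      obtain ⟨k, hkj, hj, hk⟩ := mem_iUnion₂.1 htu
      exact ⟨u, k, hkj, hj, hk⟩
  rw [himage]
  refine isClosedMap_fst_of_compactSpace _ ((toFinite _).isClosed_biUnion fun k _ => ?_)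
  exact (isClosed_le ((continuous_apply j).comp hH) continuous_const).inter
    (isClosed_le continuous_const ((continuous_apply k).comp hH))

open Classical in
noncomputable def avoidMat (x y : Fin l → Fin n → ℝ) (p : I → Fin n → ℝ) : Fin l → Fin n → Bool :=
  fun i j => decide (∀ u, p u ∉ extHole x y i j)

theorem avoidMat_eq_true {i : Fin l} {j : Fin n} :
    avoidMat x y p i j = true ↔ ∀ u, p u ∉ extHole x y i j := by
  simp [avoidMat]

theorem PassesBelow.avoidMat_eq_true {i : Fin l} {j : Fin n}
    (hmono : ∀ j, Monotone fun t => p t j) (h : PassesBelow x y i j p) :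
    avoidMat x y p i j = true :=
  _root_.avoidMat_eq_true.2 (h.notMem_extHole hmono)

theorem le_avoidMat (hp : ∀ u, p u ∈ XM x y M) : M ≤ avoidMat x y p := fun i j hij =>
  avoidMat_eq_true.2 fun u => (mem_XM_iff.1 (hp u)).2 i j hij

theorem isTotalDiPath_XM_avoidMat (hp : IsTotalDiPath n (Xfull x y) p) :
    IsTotalDiPath n (XM x y (avoidMat x y p)) p :=
  ⟨⟨hp.1.1, fun u => mem_XM_iff.2 ⟨(hp.1.2.1 u).1, fun _ _ hij => avoidMat_eq_true.1 hij u⟩,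
    hp.1.2.2⟩, hp.2⟩

theorem noZeroRow_avoidMat (hx : ∀ i j, 0 < x i j) (hxy : ∀ i j, x i j < y i j)
    (hy1 : ∀ i j, y i j < 1) (hp : IsTotalDiPath n (Xfull x y) p) :
    NoZeroRow (avoidMat x y p) := fun i =>
  (exists_passesBelow hx hxy hy1 hp i).imp fun _ h => h.avoidMat_eq_true hp.1.2.2

end AvoidedHoles

section Schedulings

variable {l n : ℕ} {x y : Fin l → Fin n → ℝ} {M N : Fin l → Fin n → Bool}

theorem matConnected_of_le (hM : NoZeroRow M) (hMN : M ≤ N) : MatConnected M N := fun i =>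
  (hM i).imp fun j hj => ⟨hj, hMN i j hj⟩

variable (x y) in
abbrev AliveMatrix := {M : Fin l → Fin n → Bool // NoZeroRow M ∧ ∃ p, IsTotalDiPath n (XM x y M) p}

variable (x y) in
abbrev AliveComponent := Quot fun M N : AliveMatrix x y => MatConnected M.1 N.1

variable (x y) in
abbrev Scheduling :=
  Quot fun p q : {p : I → Fin n → ℝ // IsTotalDiPath n (Xfull x y) p} =>
    Dihomotopic n (Xfull x y) p.1 q.1

noncomputable def avoidComponent (hx : ∀ i j, 0 < x i j) (hxy : ∀ i j, x i j < y i j)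
    (hy1 : ∀ i j, y i j < 1) {p : I → Fin n → ℝ} (hp : IsTotalDiPath n (Xfull x y) p) :
    AliveComponent x y :=
  Quot.mk _ ⟨avoidMat x y p, noZeroRow_avoidMat hx hxy hy1 hp, p, isTotalDiPath_XM_avoidMat hp⟩

theorem avoidComponent_eq_of_elemDihomotopic (hx : ∀ i j, 0 < x i j)
    (hxy : ∀ i j, x i j < y i j) (hy1 : ∀ i j, y i j < 1) {p q : I → Fin n → ℝ}
    (h : ElemDihomotopic n (Xfull x y) p q) (hp : IsTotalDiPath n (Xfull x y) p)
    (hq : IsTotalDiPath n (Xfull x y) q) :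
    avoidComponent hx hxy hy1 hp = avoidComponent hx hxy hy1 hq := by
  obtain ⟨-, -, -, -, H, hHc, rfl, rfl, hH, hHm⟩ := h
  have hHt : ∀ t, IsTotalDiPath n (Xfull x y) (H t) := fun t => by
    refine ⟨hH t, funext fun j => ?_, funext fun j => ?_⟩
    · refine le_antisymm ?_ ?_
      · simpa [hq.2.1] using hHm 0 j le_one'
      · simpa [hp.2.1] using hHm 0 j nonneg'
    · refine le_antisymm ?_ ?_
      · simpa [hq.2.2] using hHm 1 j le_one'
      · simpa [hp.2.2] using hHm 1 j nonneg'
  have hconst : IsLocallyConstant fun t => avoidComponent hx hxy hy1 (hHt t) := by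
    refine (IsLocallyConstant.iff_eventually_eq _).2 fun t₀ => ?_
    filter_upwards [eventually_mem_imp_mem_of_isClosed
      (fun ij : Fin l × Fin n => isClosed_setOf_passesBelow hHc ij.1 ij.2) t₀] with t ht
    refine Quot.sound fun i => ?_
    obtain ⟨j, hj⟩ := exists_passesBelow hx hxy hy1 (hHt t) i
    exact ⟨j, hj.avoidMat_eq_true (hH t).2.2, (ht (i, j) hj).avoidMat_eq_true (hH t₀).2.2⟩
  exact hconst.apply_eq_of_preconnectedSpace 0 1

theorem avoidComponent_eq_of_dihomotopic (hx : ∀ i j, 0 < x i j) (hxy : ∀ i j, x i j < y i j)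
    (hy1 : ∀ i j, y i j < 1) {p q : I → Fin n → ℝ} (h : Dihomotopic n (Xfull x y) p q)
    (hp : IsTotalDiPath n (Xfull x y) p) (hq : IsTotalDiPath n (Xfull x y) q) :
    avoidComponent hx hxy hy1 hp = avoidComponent hx hxy hy1 hq := by
  induction h with
  | rel _ _ h => exact avoidComponent_eq_of_elemDihomotopic hx hxy hy1 h hp hq
  | refl => rfl
  | symm _ _ _ ih => exact (ih hq hp).symm
  | trans _ _ _ h _ ih₁ ih₂ =>
    have hmid := (Dihomotopic.isTotalDiPath_iff h).1 hp
    exact (ih₁ hp hmid).trans (ih₂ hmid hq)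

noncomputable def schedulingOf (M : AliveMatrix x y) : Scheduling x y :=
  Quot.mk _ ⟨M.2.2.choose, M.2.2.choose_spec.mono (XM_subset_Xfull M.2.1)⟩

theorem schedulingOf_eq (M : AliveMatrix x y) {p : I → Fin n → ℝ}
    (hp : IsTotalDiPath n (Xfull x y) p) (hMp : IsTotalDiPath n (XM x y M.1) p) :
    schedulingOf M = Quot.mk _ ⟨p, hp⟩ :=
  Quot.sound <| dihomotopic_Xfull_of_matConnected (matConnected_of_le M.2.1 le_rfl)
    M.2.2.choose_spec hMp

variable (x y) in
noncomputable def schedulingMap : AliveComponent x y → Scheduling x y :=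
  Quot.lift schedulingOf fun M N hMN => Quot.sound <|
    dihomotopic_Xfull_of_matConnected hMN M.2.2.choose_spec N.2.2.choose_spec

noncomputable def componentMap (hx : ∀ i j, 0 < x i j) (hxy : ∀ i j, x i j < y i j)
    (hy1 : ∀ i j, y i j < 1) : Scheduling x y → AliveComponent x y :=
  Quot.lift (fun p => avoidComponent hx hxy hy1 p.2) fun p q h =>
    avoidComponent_eq_of_dihomotopic hx hxy hy1 h p.2 q.2

theorem componentMap_schedulingMap (hx : ∀ i j, 0 < x i j) (hxy : ∀ i j, x i j < y i j)
    (hy1 : ∀ i j, y i j < 1) :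
    Function.LeftInverse (componentMap hx hxy hy1) (schedulingMap x y) := by
  rintro ⟨M⟩
  refine (Quot.sound ?_).symm
  exact matConnected_of_le M.2.1 (le_avoidMat M.2.2.choose_spec.1.2.1)

theorem schedulingMap_componentMap (hx : ∀ i j, 0 < x i j) (hxy : ∀ i j, x i j < y i j)
    (hy1 : ∀ i j, y i j < 1) :
    Function.RightInverse (componentMap hx hxy hy1) (schedulingMap x y) := by
  rintro ⟨p, hp⟩
  exact schedulingOf_eq _ hp (isTotalDiPath_XM_avoidMat hp)

end Schedulings

theorem stmt7_general {l n : ℕ}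
    (x y : Fin l → Fin n → ℝ)
    (hx : ∀ i j, 0 < x i j) (hxy : ∀ i j, x i j < y i j) (hy1 : ∀ i j, y i j < 1) :
    ∃ F : Quot (fun M N : {M : Fin l → Fin n → Bool //
            NoZeroRow M ∧ ∃ p, IsTotalDiPath n (XM x y M) p} => MatConnected M.1 N.1) →
          Quot (fun p q : {p : unitInterval → Fin n → ℝ //
            IsTotalDiPath n (Xfull x y) p} => Dihomotopic n (Xfull x y) p.1 q.1),
      Function.Bijective F ∧
      ∀ (M : {M : Fin l → Fin n → Bool //
            NoZeroRow M ∧ ∃ p, IsTotalDiPath n (XM x y M) p})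
        (p : {p : unitInterval → Fin n → ℝ // IsTotalDiPath n (Xfull x y) p}),
        IsTotalDiPath n (XM x y M.1) p.1 →
        F (Quot.mk _ M) = Quot.mk _ p :=
  ⟨schedulingMap x y,
    Function.bijective_iff_has_inverse.2 ⟨componentMap hx hxy hy1,
      componentMap_schedulingMap hx hxy hy1, schedulingMap_componentMap hx hxy hy1⟩,
    fun M p hMp => schedulingOf_eq M p.2 hMp⟩

theorem stmt7 {l n : ℕ} (hn : 1 ≤ n) (hl : 1 ≤ l)
    (x y : Fin l → Fin n → ℝ)
    (hx : ∀ i j, 0 < x i j) (hxy : ∀ i j, x i j < y i j) (hy1 : ∀ i j, y i j < 1) :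
    ∃ F : Quot (fun M N : {M : Fin l → Fin n → Bool //
            NoZeroRow M ∧ ∃ p, IsTotalDiPath n (XM x y M) p} => MatConnected M.1 N.1) →
          Quot (fun p q : {p : unitInterval → Fin n → ℝ //
            IsTotalDiPath n (Xfull x y) p} => Dihomotopic n (Xfull x y) p.1 q.1),
      Function.Bijective F ∧
      ∀ (M : {M : Fin l → Fin n → Bool //
            NoZeroRow M ∧ ∃ p, IsTotalDiPath n (XM x y M) p})
        (p : {p : unitInterval → Fin n → ℝ // IsTotalDiPath n (Xfull x y) p}),
        IsTotalDiPath n (XM x y M.1) p.1 →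
        F (Quot.mk _ M) = Quot.mk _ p :=
  stmt7_general x y hx hxy hy1
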